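/- arXiv:2111.03116 — 2 statements merged into one kernel-verified Lean document; each statement's English description precedes it below -/
import Mathlib

section
/- (Lemma 1) Let μ and ν be probability measures on ℝ, with μ having finite variance σ_E², and let λ and γ be their characteristic functions. Suppose that for all x ∈ (0, π) and the given ω > 0 the characteristic-function uncertainty relation |γ(ω)|² + |λ(x/ω)|² ≤ β(x) holds, where β(x) = 2√2 (√2 − √(1 − cos x)) / (1 + cos x). Then σ_E ≥ ω |γ(ω)| / π. -/
/-!
On `[0, π)` the half-angle formulas reduce Rudnicki's bound to `β(x) = 2 / (1 + sin (x / 2))`,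
which tends to `1` as `x → π⁻`. By continuity of characteristic functions the hypothesis therefore
gives `|γ(ω)|² + |λ(π / ω)|² ≤ 1`. Centering `μ` at its mean and using `cos y ≥ 1 - y² / 2` gives
`|λ(t)| ≥ 1 - t² σ² / 2`, and `1 - (1 - d / 2)² ≤ d` then yields `|γ(ω)|² ≤ (π / ω)² σ²`.
-/

open MeasureTheory Real

/-- The bound function of the characteristic-function uncertainty relation of Rudnicki (2016). -/
noncomputable def rudnickiBeta (x : ℝ) : ℝ :=
  2 * Real.sqrt 2 * (Real.sqrt 2 - Real.sqrt (1 - Real.cos x)) / (1 + Real.cos x)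

/-- The characteristic function of a measure on `ℝ`. -/
noncomputable def charFunction (μ : Measure ℝ) (ω : ℝ) : ℂ :=
  ∫ E, Complex.exp (Complex.I * ω * E) ∂μ

open ProbabilityTheory Filter Topology
open scoped Complex

lemma charFunction_eq_charFun (μ : Measure ℝ) (t : ℝ) : charFunction μ t = charFun μ t := by
  rw [charFunction, charFun_apply_real]
  congr with x
  ring_nf

lemma norm_charFun_eq_norm_integral_exp_sub (μ : Measure ℝ) (m t : ℝ) :
    ‖charFun μ t‖ = ‖∫ x, cexp ((t * (x - m) : ℝ) * Complex.I) ∂μ‖ := by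
  have h : ∫ x, cexp ((t * (x - m) : ℝ) * Complex.I) ∂μ
      = charFun μ t * cexp ((-(t * m) : ℝ) * Complex.I) := by
    rw [charFun_apply_real, ← integral_mul_const]
    congr with x
    rw [← Complex.exp_add]
    push_cast
    ring_nf
  rw [h, norm_mul, Complex.norm_exp_ofReal_mul_I, mul_one]

lemma integral_cos_le_norm_integral_exp {α : Type*} [MeasurableSpace α] {μ : Measure α}
    [IsFiniteMeasure μ] {f : α → ℝ} (hf : AEMeasurable f μ) :
    ∫ x, Real.cos (f x) ∂μ ≤ ‖∫ x, cexp (f x * Complex.I) ∂μ‖ := by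
  have hint : Integrable (fun x => cexp (f x * Complex.I)) μ :=
    .of_bound (by fun_prop) 1 (ae_of_all _ fun x => (Complex.norm_exp_ofReal_mul_I _).le)
  calc ∫ x, Real.cos (f x) ∂μ = (∫ x, cexp (f x * Complex.I) ∂μ).re := by
        simp only [← Complex.exp_ofReal_mul_I_re, ← RCLike.re_to_complex, integral_re hint]
    _ ≤ _ := Complex.re_le_norm _

lemma one_sub_integral_sq_div_two_le_integral_cos {α : Type*} [MeasurableSpace α]
    {μ : Measure α} [IsProbabilityMeasure μ] {f : α → ℝ} (hf : AEMeasurable f μ)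
    (hf2 : Integrable (fun x => f x ^ 2) μ) :
    1 - (∫ x, f x ^ 2 ∂μ) / 2 ≤ ∫ x, Real.cos (f x) ∂μ := by
  have hcos : Integrable (fun x => Real.cos (f x)) μ :=
    .of_bound (by fun_prop) 1 (ae_of_all _ fun x => by simpa using abs_cos_le_one (f x))
  calc 1 - (∫ x, f x ^ 2 ∂μ) / 2 = ∫ x, (1 - f x ^ 2 / 2) ∂μ := by
        rw [integral_sub (integrable_const 1) (hf2.div_const 2), integral_div]
        simp
    _ ≤ _ := integral_mono ((integrable_const 1).sub (hf2.div_const 2)) hcos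
        fun x => one_sub_sq_div_two_le_cos

lemma one_sub_sq_mul_variance_div_two_le_norm_charFun {μ : Measure ℝ} [IsProbabilityMeasure μ]
    (hμ : MemLp id 2 μ) (t : ℝ) :
    1 - t ^ 2 * Var[id; μ] / 2 ≤ ‖charFun μ t‖ := by
  set m := μ[id]
  have hsq : Integrable (fun x => (t * (x - m)) ^ 2) μ :=
    ((hμ.sub (memLp_const m)).const_mul t).integrable_sq
  have hvar : ∫ x, (t * (x - m)) ^ 2 ∂μ = t ^ 2 * Var[id; μ] := by
    simp only [mul_pow, integral_const_mul, variance_eq_integral aemeasurable_id, id, m]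
  calc 1 - t ^ 2 * Var[id; μ] / 2 ≤ ∫ x, Real.cos (t * (x - m)) ∂μ := by
        rw [← hvar]
        exact one_sub_integral_sq_div_two_le_integral_cos (by fun_prop) hsq
    _ ≤ ‖∫ x, cexp ((t * (x - m) : ℝ) * Complex.I) ∂μ‖ :=
        integral_cos_le_norm_integral_exp (by fun_prop)
    _ = ‖charFun μ t‖ := (norm_charFun_eq_norm_integral_exp_sub μ m t).symm

lemma rudnickiBeta_eq_two_div_one_add_sin {x : ℝ} (hx : x ∈ Set.Ico 0 π) :
    rudnickiBeta x = 2 / (1 + Real.sin (x / 2)) := by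
  obtain ⟨hx0, hxπ⟩ := hx
  set s := Real.sin (x / 2)
  have hs0 : 0 ≤ s := sin_nonneg_of_nonneg_of_le_pi (by linarith) (by linarith [pi_pos])
  have hs1 : s < 1 := by
    have hc : 0 < Real.cos (x / 2) := cos_pos_of_mem_Ioo ⟨by linarith [pi_pos], by linarith⟩
    nlinarith [sin_sq_add_cos_sq (x / 2)]
  have hcos : Real.cos x = 1 - 2 * s ^ 2 := by
    rw [← Real.cos_two_mul_eq_one_sub, mul_div_cancel₀ x two_ne_zero]
  have hsqrt : √(1 - Real.cos x) = √2 * s := by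
    rw [hcos, show 1 - (1 - 2 * s ^ 2) = 2 * s ^ 2 by ring, sqrt_mul zero_le_two, sqrt_sq hs0]
  have h2 : √2 ^ 2 = 2 := sq_sqrt zero_le_two
  rw [rudnickiBeta, hsqrt, hcos]
  field_simp [show (1 + (1 - 2 * s ^ 2)) ≠ 0 by nlinarith]
  linear_combination (1 - s) * (1 + s) * h2

lemma tendsto_rudnickiBeta_nhdsLT_pi : Tendsto rudnickiBeta (𝓝[<] π) (𝓝 1) := by
  have hlim : Tendsto (fun x => 2 / (1 + Real.sin (x / 2))) (𝓝[<] π) (𝓝 1) := by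
    have hcont : ContinuousAt (fun x => 2 / (1 + Real.sin (x / 2))) π :=
      continuousAt_const.div (by fun_prop) (by norm_num)
    convert hcont.tendsto.mono_left nhdsWithin_le_nhds using 2
    norm_num
  refine hlim.congr' ?_
  filter_upwards [Ico_mem_nhdsLT pi_pos] with x hx
  exact (rudnickiBeta_eq_two_div_one_add_sin hx).symm

lemma le_one_of_forall_le_rudnickiBeta {g : ℝ → ℝ} (hg : ContinuousAt g π)
    (h : ∀ x ∈ Set.Ioo 0 π, g x ≤ rudnickiBeta x) : g π ≤ 1 :=
  le_of_tendsto_of_tendsto (hg.tendsto.mono_left nhdsWithin_le_nhds)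
    tendsto_rudnickiBeta_nhdsLT_pi (eventually_of_mem (Ioo_mem_nhdsLT pi_pos) h)

lemma sq_le_of_sq_add_sq_le_one {a b d : ℝ} (hab : a ^ 2 + b ^ 2 ≤ 1) (hb : 1 - d / 2 ≤ b) :
    a ^ 2 ≤ d := by
  nlinarith [sq_nonneg b, sq_nonneg (b - (1 - d / 2)), sq_nonneg d]

theorem stmt_5_general (μ ν : Measure ℝ) [IsProbabilityMeasure μ]
    (h2 : Integrable (fun E => E ^ 2) μ)
    (ω : ℝ) (hω : 0 < ω)
    (hChUR : ∀ x ∈ Set.Ioo (0 : ℝ) π,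
      ‖charFunction ν ω‖ ^ 2 + ‖charFunction μ (x / ω)‖ ^ 2 ≤ rudnickiBeta x) :
    ω * ‖charFunction ν ω‖ / π
      ≤ Real.sqrt ((∫ E, E ^ 2 ∂μ) - (∫ E, E ∂μ) ^ 2) := by
  have hμ : MemLp id 2 μ := (memLp_two_iff_integrable_sq aestronglyMeasurable_id).2 h2
  set c := ‖charFunction ν ω‖
  have hUR : c ^ 2 + ‖charFun μ (π / ω)‖ ^ 2 ≤ 1 := by
    refine le_one_of_forall_le_rudnickiBeta (g := fun x => c ^ 2 + ‖charFun μ (x / ω)‖ ^ 2)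
      (by fun_prop) fun x hx => ?_
    simpa only [charFunction_eq_charFun] using hChUR x hx
  have hc : c ^ 2 ≤ (π / ω) ^ 2 * Var[id; μ] :=
    sq_le_of_sq_add_sq_le_one hUR (one_sub_sq_mul_variance_div_two_le_norm_charFun hμ _)
  have hvar : Var[id; μ] = (∫ E, E ^ 2 ∂μ) - (∫ E, E ∂μ) ^ 2 := variance_eq_sub hμ
  refine hvar ▸ le_sqrt_of_sq_le ?_
  calc (ω * c / π) ^ 2 = c ^ 2 / (π / ω) ^ 2 := by field_simp
    _ ≤ Var[id; μ] := (div_le_iff₀' (by positivity)).2 hc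

/-- Lemma 1: If the characteristic-function uncertainty relation
`|γ(ω)|² + |λ(x/ω)|² ≤ β(x)` holds for all `x ∈ (0, π)` at a given `ω > 0`, then the
energy dispersion satisfies `σ_E ≥ ω |γ(ω)| / π`. -/
theorem stmt_5 (μ ν : Measure ℝ) [IsProbabilityMeasure μ] [IsProbabilityMeasure ν]
    (h2 : Integrable (fun E => E ^ 2) μ)
    (ω : ℝ) (hω : 0 < ω)
    (hChUR : ∀ x ∈ Set.Ioo (0 : ℝ) π,
      ‖charFunction ν ω‖ ^ 2 + ‖charFunction μ (x / ω)‖ ^ 2 ≤ rudnickiBeta x) :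
    ω * ‖charFunction ν ω‖ / π
      ≤ Real.sqrt ((∫ E, E ^ 2 ∂μ) - (∫ E, E ∂μ) ^ 2) :=
  stmt_5_general μ ν h2 ω hω hChUR
end

section
/- Let ρ = diag(p, 1−p) with 0 ≤ p < 1/2 be a qubit density matrix diagonal in the energy basis, and H = diag(0, ω) with ω > 0. Then for every 2×2 unitary V, with W = H − V†HV and w = Tr[Wρ], the variance satisfies Tr[W²ρ] − w² = ω w/(1−2p) − w². Hence for an incoherent qubit state the variance gain is uniquely determined by the extracted work w. -/
/-!
Write `H = diag(0, ω)` and `Q = V†HV`. Unitarity gives `Q² = ωQ` and `Tr Q = Tr H = ω`, and these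
two facts alone force the diagonals of `W = H - Q` and `W²` to be `(-q, q)` and `(ωq, ωq)` with
`q = Q₀₀`. Against the diagonal state `ρ = diag(p, 1 - p)` this gives `w = (1 - 2p) q` and
`Tr[W²ρ] = ωq = ωw / (1 - 2p)`.
-/

open Matrix

namespace Matrix

section Unitary

variable {n R : Type*} [Fintype n] [DecidableEq n] [CommRing R] [StarRing R]
  {V : Matrix n n R}

theorem trace_conjTranspose_mul_mul_of_mem_unitaryGroup (hV : V ∈ unitaryGroup n R)
    (A : Matrix n n R) : (Vᴴ * A * V).trace = A.trace := by
  rw [trace_mul_comm, ← Matrix.mul_assoc, show V * Vᴴ = 1 from mem_unitaryGroup_iff.mp hV,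
    Matrix.one_mul]

theorem conjTranspose_mul_mul_sq_of_mem_unitaryGroup (hV : V ∈ unitaryGroup n R)
    (A : Matrix n n R) : (Vᴴ * A * V) ^ 2 = Vᴴ * A ^ 2 * V := by
  simp only [sq, Matrix.mul_assoc]
  rw [← Matrix.mul_assoc V, show V * Vᴴ = 1 from mem_unitaryGroup_iff.mp hV, Matrix.one_mul]

end Unitary

theorem trace_mul_diagonal_fin_two {R : Type*} [Semiring R] (M : Matrix (Fin 2) (Fin 2) R)
    (x y : R) : (M * !![x, 0; 0, y]).trace = M 0 0 * x + M 1 1 * y := by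
  simp [trace_fin_two, mul_apply, Fin.sum_univ_two]

end Matrix

section Qubit

variable {R : Type*} [CommRing R] {ω : R} {Q : Matrix (Fin 2) (Fin 2) R}

theorem diag_sub_of_sq_eq_smul (hQ : Q ^ 2 = ω • Q) (htr : Q.trace = ω) :
    (!![0, 0; 0, ω] - Q) 0 0 = -Q 0 0 ∧ (!![0, 0; 0, ω] - Q) 1 1 = Q 0 0 ∧
      ((!![0, 0; 0, ω] - Q) ^ 2) 0 0 = ω * Q 0 0 ∧
      ((!![0, 0; 0, ω] - Q) ^ 2) 1 1 = ω * Q 0 0 := by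
  have h00 := congrFun (congrFun hQ 0) 0
  have h11 := congrFun (congrFun hQ 1) 1
  rw [trace_fin_two] at htr
  simp only [sq, mul_apply, Fin.sum_univ_two, Matrix.smul_apply, smul_eq_mul] at h00 h11
  simp only [sq, mul_apply, Fin.sum_univ_two, Matrix.sub_apply, of_apply, cons_val', cons_val_zero,
    cons_val_one, empty_val', cons_val_fin_one]
  refine ⟨by ring, by linear_combination -htr, by linear_combination h00, ?_⟩
  linear_combination h11 - ω * htr

end Qubit

theorem stmt_12_general (p ω : ℝ) (hp : p < 1 / 2)
    (V : Matrix (Fin 2) (Fin 2) ℂ) (hV : V ∈ Matrix.unitaryGroup (Fin 2) ℂ) :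
    let ρ : Matrix (Fin 2) (Fin 2) ℂ := !![(p : ℂ), 0; 0, ((1 - p : ℝ) : ℂ)]
    let H : Matrix (Fin 2) (Fin 2) ℂ := !![0, 0; 0, (ω : ℂ)]
    let W : Matrix (Fin 2) (Fin 2) ℂ := H - Vᴴ * H * V
    (W ^ 2 * ρ).trace - (W * ρ).trace ^ 2
      = (ω : ℂ) * (W * ρ).trace / ((1 : ℂ) - 2 * (p : ℂ)) - (W * ρ).trace ^ 2 := by
  intro ρ H W
  have hH : H ^ 2 = (ω : ℂ) • H := by
    ext i j; fin_cases i <;> fin_cases j <;> simp [H, sq]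
  have hQ : (Vᴴ * H * V) ^ 2 = (ω : ℂ) • (Vᴴ * H * V) := by
    rw [conjTranspose_mul_mul_sq_of_mem_unitaryGroup hV, hH, Matrix.mul_smul, Matrix.smul_mul]
  have htr : (Vᴴ * H * V).trace = ω := by
    simp [trace_conjTranspose_mul_mul_of_mem_unitaryGroup hV, H, trace_fin_two]
  obtain ⟨hW00, hW11, hW200, hW211⟩ : W 0 0 = _ ∧ W 1 1 = _ ∧ (W ^ 2) 0 0 = _ ∧ (W ^ 2) 1 1 = _ :=
    diag_sub_of_sq_eq_smul hQ htr
  have hp' : (1 : ℂ) - 2 * (p : ℂ) ≠ 0 := by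
    exact_mod_cast (by linarith : (1 - 2 * p : ℝ) ≠ 0)
  rw [sub_left_inj, trace_mul_diagonal_fin_two, trace_mul_diagonal_fin_two, hW00, hW11, hW200,
    hW211, eq_div_iff hp']
  push_cast
  ring

/-- For an incoherent qubit state `ρ = diag(p, 1-p)` with `0 ≤ p < 1/2` and
`H = diag(0, ω)`, `ω > 0`, every unitary `V` with work operator `W = H - V†HV` and
extracted work `w = Tr[Wρ]` yields variance `Tr[W²ρ] - w² = ω w/(1-2p) - w²`. -/
theorem stmt_12 (p ω : ℝ) (hp0 : 0 ≤ p) (hp : p < 1 / 2) (hω : 0 < ω)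
    (V : Matrix (Fin 2) (Fin 2) ℂ) (hV : V ∈ Matrix.unitaryGroup (Fin 2) ℂ) :
    let ρ : Matrix (Fin 2) (Fin 2) ℂ := !![(p : ℂ), 0; 0, ((1 - p : ℝ) : ℂ)]
    let H : Matrix (Fin 2) (Fin 2) ℂ := !![0, 0; 0, (ω : ℂ)]
    let W : Matrix (Fin 2) (Fin 2) ℂ := H - Vᴴ * H * V
    (W ^ 2 * ρ).trace - (W * ρ).trace ^ 2
      = (ω : ℂ) * (W * ρ).trace / ((1 : ℂ) - 2 * (p : ℂ)) - (W * ρ).trace ^ 2 :=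
  stmt_12_general p ω hp V hV
end
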